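/- arXiv:math/0401146 — 2 statements merged into one kernel-verified Lean document; each statement's English description precedes it below -/
import Mathlib

section
/- Let φ be a flow on M with reversing symmetry R. If x₀ ∈ Fix(R) and φ(T, x₀) ∈ Fix(R) for some T, then the orbit of x₀ is R-symmetric: R({φ(t, x₀) | t ∈ ℝ}) = {φ(t, x₀) | t ∈ ℝ}. -/
theorem stmt2 {M : Type*} (φ : ℝ → M → M)
    (hφ0 : ∀ x, φ 0 x = x)
    (hφadd : ∀ s t x, φ (s + t) x = φ s (φ t x))
    (R : M → M) (hR : R ∘ R = id)
    (hrev : ∀ t x, R (φ t x) = φ (-t) (R x))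
    (x₀ : M) (hx₀ : R x₀ = x₀)
    (T : ℝ) (hTfix : R (φ T x₀) = φ T x₀) :
    R '' (Set.range fun t => φ t x₀) = Set.range fun t => φ t x₀ := by
  ext y
  constructor
  · rintro ⟨_, ⟨t, rfl⟩, rfl⟩
    exact ⟨-t, by simp [hrev, hx₀]⟩
  · rintro ⟨t, rfl⟩
    exact ⟨φ (-t) x₀, ⟨-t, rfl⟩, by simp [hrev, hx₀]⟩
end

section
/- Let φ be a flow on M with reversing symmetry R, and suppose x₀ ∈ Fix(R), φ(T, x₀) ∈ Fix(R) with T > 0, and the orbit of x₀ is not an equilibrium. If T is the minimal positive time with φ(T,x₀) ∈ Fix(R) and x₀ has minimal period p, then p = 2T or the orbit meets Fix(R) in at least two points within one period. -/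
theorem stmt15 {M : Type*} (φ : ℝ → M → M)
    (hφ0 : ∀ x, φ 0 x = x)
    (hφadd : ∀ s t x, φ (s + t) x = φ s (φ t x))
    (R : M → M) (hR : R ∘ R = id)
    (hrev : ∀ t x, R (φ t x) = φ (-t) (R x))
    (x₀ : M) (hx₀ : R x₀ = x₀)
    (T : ℝ) (hT : T > 0) (hTfix : R (φ T x₀) = φ T x₀)
    (hnoneq : ∃ t : ℝ, φ t x₀ ≠ x₀)
    (hTmin : ∀ s, 0 < s → s < T → R (φ s x₀) ≠ φ s x₀)
    (p : ℝ) (hp : p > 0) (hper : φ p x₀ = x₀)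
    (hpmin : ∀ q, 0 < q → q < p → φ q x₀ ≠ x₀) :
    p = 2 * T ∨
      ∃ t₁ t₂, 0 ≤ t₁ ∧ t₁ < t₂ ∧ t₂ < p ∧
        R (φ t₁ x₀) = φ t₁ x₀ ∧ R (φ t₂ x₀) = φ t₂ x₀ ∧ φ t₁ x₀ ≠ φ t₂ x₀ := by
  left
  -- φ(-p) x₀ = x₀
  have hnegp : φ (-p) x₀ = x₀ := by
    have := hφadd (-p) p x₀
    rw [hper] at this
    simpa [hφ0] using this.symm
  -- φ(p/2) x₀ is R-fixed
  have hhalf : R (φ (p/2) x₀) = φ (p/2) x₀ := by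
    have h1 : R (φ (p/2) x₀) = φ (-(p/2)) x₀ := by rw [hrev, hx₀]
    have h2 : φ (-(p/2)) x₀ = φ (p/2) x₀ := by
      have := hφadd (p/2) (-p) x₀
      rw [hnegp] at this
      have e : p/2 + -p = -(p/2) := by ring
      rw [e] at this
      exact this
    rw [h1, h2]
  -- hence T ≤ p/2
  have hTle : T ≤ p / 2 := by
    by_contra h
    push_neg at h
    exact hTmin (p/2) (by linarith) h hhalf
  -- φ T x₀ = φ (-T) x₀
  have hsym : φ T x₀ = φ (-T) x₀ := by
    have := hrev T x₀
    rw [hx₀] at this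
    rw [← this, hTfix]
  -- 2T is a period
  have h2T : φ (2 * T) x₀ = x₀ := by
    have : φ (T + T) x₀ = φ T (φ T x₀) := hφadd T T x₀
    rw [hsym] at this
    rw [← hφadd T (-T) x₀] at this
    have e : 2 * T = T + T := by ring
    rw [e, this]
    simp [hφ0]
  -- p ≤ 2T
  have hple : p ≤ 2 * T := by
    by_contra h
    push_neg at h
    exact hpmin (2 * T) (by linarith) h h2T
  linarith
end
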